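/- arXiv:2401.02747 — 3 statements merged into one kernel-verified Lean document; each statement's English description precedes it below -/
import Mathlib

section
/- Let f: (0,∞) → [0,∞) be monotone nondecreasing and satisfy f(Nτ) ≤ N^m f(τ) for every positive integer N and every τ > 0, for some fixed positive integer m. Then sup_{τ>0} f(τ)/τ^m = lim_{τ→0⁺} f(τ)/τ^m (where both sides may be +∞). -/
open Filter Topology

/-!
Given `σ, τ > 0`, pick `N = ⌈σ / τ⌉₊`, so that `σ ≤ Nτ ≤ σ + τ`. Monotonicity and the scaling
bound give `f σ ≤ N ^ m f τ ≤ ((σ + τ) / τ) ^ m f τ`, i.e. `f σ / (σ + τ) ^ m ≤ f τ / τ ^ m`.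
As `τ → 0⁺` the left side tends to `f σ / σ ^ m`, so the ratio `f τ / τ ^ m` eventually exceeds
every value strictly below its supremum, while it never exceeds that supremum.
-/

theorem tendsto_iSup_of_eventually_gt {α β : Type*} [CompleteLinearOrder β] [TopologicalSpace β]
    [OrderTopology β] {l : Filter α} {s : Set α} (hs : s ∈ l) {g : α → β}
    (hgt : ∀ x ∈ s, ∀ b < g x, ∀ᶠ y in l, b < g y) :
    Tendsto g l (𝓝 (⨆ x : s, g x)) := by
  refine tendsto_order.2 ⟨fun b hb => ?_, fun b hb => ?_⟩
  · obtain ⟨⟨x, hx⟩, hbx⟩ := lt_iSup_iff.1 hb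
    exact hgt x hx b hbx
  · filter_upwards [hs] with y hy
    exact (le_iSup (fun x : s => g x) ⟨y, hy⟩).trans_lt hb

theorem exists_nat_mul_mem_Icc {σ τ : ℝ} (hσ : 0 < σ) (hτ : 0 < τ) :
    ∃ N : ℕ, 0 < N ∧ σ ≤ N * τ ∧ N * τ ≤ σ + τ := by
  refine ⟨⌈σ / τ⌉₊, Nat.ceil_pos.2 (div_pos hσ hτ), ?_, ?_⟩
  · exact (div_le_iff₀ hτ).1 (Nat.le_ceil _)
  · have hN : (⌈σ / τ⌉₊ : ℝ) ≤ σ / τ + 1 := (Nat.ceil_lt_add_one (div_pos hσ hτ).le).le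
    calc (⌈σ / τ⌉₊ : ℝ) * τ ≤ (σ / τ + 1) * τ := mul_le_mul_of_nonneg_right hN hτ.le
      _ = σ + τ := by field_simp

theorem div_add_pow_le_div_pow {m : ℕ} {f : ℝ → ℝ} (hf0 : ∀ τ : ℝ, 0 < τ → 0 ≤ f τ)
    (hmono : ∀ σ τ : ℝ, 0 < σ → σ ≤ τ → f σ ≤ f τ)
    (hsub : ∀ (N : ℕ), 0 < N → ∀ τ : ℝ, 0 < τ → f (N * τ) ≤ (N : ℝ) ^ m * f τ)
    {σ τ : ℝ} (hσ : 0 < σ) (hτ : 0 < τ) :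
    f σ / (σ + τ) ^ m ≤ f τ / τ ^ m := by
  obtain ⟨N, hN, hσN, hNτ⟩ := exists_nat_mul_mem_Icc hσ hτ
  have hN_le : (N : ℝ) ^ m ≤ ((σ + τ) / τ) ^ m :=
    pow_le_pow_left₀ N.cast_nonneg ((le_div_iff₀ hτ).2 hNτ) m
  have hfσ : f σ ≤ (σ + τ) ^ m / τ ^ m * f τ := by
    calc f σ ≤ f (N * τ) := hmono _ _ hσ hσN
      _ ≤ (N : ℝ) ^ m * f τ := hsub N hN τ hτ
      _ ≤ ((σ + τ) / τ) ^ m * f τ := mul_le_mul_of_nonneg_right hN_le (hf0 τ hτ)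
      _ = (σ + τ) ^ m / τ ^ m * f τ := by rw [div_pow]
  rw [div_le_div_iff₀ (by positivity) (by positivity)]
  calc f σ * τ ^ m ≤ (σ + τ) ^ m / τ ^ m * f τ * τ ^ m :=
        mul_le_mul_of_nonneg_right hfσ (by positivity)
    _ = f τ * (σ + τ) ^ m := by field_simp

theorem tendsto_div_add_pow_nhdsGT_zero (m : ℕ) (c : ℝ) {σ : ℝ} (hσ : 0 < σ) :
    Tendsto (fun τ : ℝ => c / (σ + τ) ^ m) (𝓝[>] 0) (𝓝 (c / σ ^ m)) := by
  have hcont : ContinuousAt (fun τ : ℝ => c / (σ + τ) ^ m) 0 :=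
    continuousAt_const.div (by fun_prop) (by simp [hσ.ne'])
  simpa using hcont.tendsto.mono_left nhdsWithin_le_nhds

theorem sup_eq_limit_abstract_general (m : ℕ) (f : ℝ → ℝ)
    (hf0 : ∀ τ : ℝ, 0 < τ → 0 ≤ f τ)
    (hmono : ∀ σ τ : ℝ, 0 < σ → σ ≤ τ → f σ ≤ f τ)
    (hsub : ∀ (N : ℕ), 0 < N → ∀ τ : ℝ, 0 < τ → f (N * τ) ≤ (N : ℝ) ^ m * f τ) :
    Tendsto (fun τ : ℝ => ENNReal.ofReal (f τ / τ ^ m)) (𝓝[>] 0)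
      (𝓝 (⨆ τ : {τ : ℝ // 0 < τ}, ENNReal.ofReal (f τ / (τ : ℝ) ^ m))) := by
  refine tendsto_iSup_of_eventually_gt (s := Set.Ioi 0) self_mem_nhdsWithin ?_
  intro σ hσ b hb
  have hlower := (ENNReal.continuous_ofReal.tendsto _).comp
    (tendsto_div_add_pow_nhdsGT_zero m (f σ) hσ)
  filter_upwards [hlower.eventually_const_lt hb, self_mem_nhdsWithin] with τ hbτ hτ
  exact hbτ.trans_le (ENNReal.ofReal_le_ofReal (div_add_pow_le_div_pow hf0 hmono hsub hσ hτ))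

/-- If `f : (0,∞) → [0,∞)` is monotone nondecreasing and satisfies `f(Nτ) ≤ N^m f(τ)`
for every positive integer `N` and every `τ > 0`, then
`sup_{τ>0} f(τ)/τ^m = lim_{τ→0⁺} f(τ)/τ^m` (both sides possibly `+∞`, computed in
`ℝ≥0∞`). -/
theorem sup_eq_limit_abstract (m : ℕ) (hm : 0 < m) (f : ℝ → ℝ)
    (hf0 : ∀ τ : ℝ, 0 < τ → 0 ≤ f τ)
    (hmono : ∀ σ τ : ℝ, 0 < σ → σ ≤ τ → f σ ≤ f τ)
    (hsub : ∀ (N : ℕ), 0 < N → ∀ τ : ℝ, 0 < τ → f (N * τ) ≤ (N : ℝ) ^ m * f τ) :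
    Tendsto (fun τ : ℝ => ENNReal.ofReal (f τ / τ ^ m)) (𝓝[>] 0)
      (𝓝 (⨆ τ : {τ : ℝ // 0 < τ}, ENNReal.ofReal (f τ / (τ : ℝ) ^ m))) :=
  sup_eq_limit_abstract_general m f hf0 hmono hsub
end

section
/- Let X be a locally compact second countable space with a continuous ℝ-flow (a_t)_{t∈ℝ}, S ⊆ X a closed subset, and x ∈ S a point whose forward visit times {t > 0 : a_t x ∈ S} form a discrete nonempty set, with first return time τ(x) = min{t>0 : a_t x ∈ S}. Suppose S admits a relatively open subset U ∋ x and γ > 0 such that the map (0,γ) × U → X, (t,y) ↦ a_t y, is injective, open, and satisfies U^{(0,γ)} ∩ S = ∅; suppose moreover that for every δ > 0 there are open sets witnessing that nearby points y ∈ S have no visit times in [γ, τ(x)−δ] and have a visit time in (τ(x)−δ, τ(x)+δ) (given by the open/closed hitting-set conditions). Then the first return time function τ_S is continuous at x. -/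
open Filter Topology

/-- Continuity of the first return time to a cross-section at a good point: if `S` is
closed, the forward visit times of `x ∈ S` are discrete with first return time `τx`,
there is a flow box `(0,γ) × U` around `x` (flow map injective and open, with
`U^{(0,γ)} ∩ S = ∅`), and for every `δ > 0` nearby points of `S` have no visit times in
`[γ, τx - δ]` but have one in `(τx - δ, τx + δ)`, then any first-return-time function
`τS` on `S` is continuous at `x` within `S`. -/
theorem return_time_continuous_at {X : Type*} [TopologicalSpace X]
    [LocallyCompactSpace X] [SecondCountableTopology X]
    (a : ℝ → X → X)
    (hcont : Continuous fun p : ℝ × X => a p.1 p.2)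
    (ha0 : ∀ x, a 0 x = x) (haAdd : ∀ s t x, a (s + t) x = a s (a t x))
    (S : Set X) (hScl : IsClosed S) (x : X) (hxS : x ∈ S)
    (τS : X → ℝ)
    (hτS : ∀ y ∈ S, (∃ t : ℝ, 0 < t ∧ a t y ∈ S) →
      0 < τS y ∧ a (τS y) y ∈ S ∧ ∀ t : ℝ, 0 < t → a t y ∈ S → τS y ≤ t)
    (τx : ℝ) (hτx : τS x = τx) (hτx_pos : 0 < τx) (hτx_ret : a τx x ∈ S)
    (hdisc : ∀ t : ℝ, 0 < t → a t x ∈ S → τx ≤ t)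
    (U : Set X) (γ : ℝ) (hγ : 0 < γ) (hxU : x ∈ U)
    (hUopen : ∃ O : Set X, IsOpen O ∧ U = S ∩ O)
    (hUinj : Set.InjOn (fun p : ℝ × X => a p.1 p.2) (Set.Ioo 0 γ ×ˢ U))
    (hUflow : IsOpenMap fun p : (Set.Ioo (0:ℝ) γ) × U => a p.1.1 p.2.1)
    (hUdisj : ∀ y ∈ U, ∀ t ∈ Set.Ioo 0 γ, a t y ∉ S)
    (hwitness : ∀ δ > 0, ∃ V : Set X, IsOpen V ∧ x ∈ V ∧
      ∀ y ∈ V ∩ S, (∀ t ∈ Set.Icc γ (τx - δ), a t y ∉ S) ∧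
        ∃ t ∈ Set.Ioo (τx - δ) (τx + δ), 0 < t ∧ a t y ∈ S) :
    ContinuousWithinAt τS S x := by
  obtain ⟨O, hOopen, hUO⟩ := hUopen
  rw [ContinuousWithinAt, hτx, Metric.tendsto_nhds]
  intro δ hδ
  obtain ⟨V, hVopen, hxV, hV⟩ := hwitness δ hδ
  have hmem : V ∩ O ∈ 𝓝[S] x := by
    apply mem_nhdsWithin_of_mem_nhds
    exact (hVopen.inter hOopen).mem_nhds ⟨hxV, (hUO ▸ hxU).2⟩
  filter_upwards [hmem, self_mem_nhdsWithin] with y hy hyS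
  have hyU : y ∈ U := hUO ▸ ⟨hyS, hy.2⟩
  obtain ⟨h1, t, htmem, htpos, htS⟩ := hV y ⟨hy.1, hyS⟩
  obtain ⟨hpos, hret, hmin⟩ := hτS y hyS ⟨t, htpos, htS⟩
  have hub : τS y < τx + δ := lt_of_le_of_lt (hmin t htpos htS) htmem.2
  have hge : γ ≤ τS y := by
    by_contra h
    exact hUdisj y hyU (τS y) ⟨hpos, lt_of_not_ge h⟩ hret
  have hlb : τx - δ < τS y := by
    by_contra h
    exact h1 (τS y) ⟨hge, le_of_not_gt h⟩ hret
  rw [Real.dist_eq, abs_lt]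
  constructor <;> linarith
end

section
/- Let S be a Borel cross-section for a measure-preserving ℝ-flow (a_t) on a probability space (X, μ), with cross-sectional measure μ_S, and suppose the first return map T_S: S → S and return time τ_S are defined μ_S-a.e., with T_S preserving μ_S. Let A ⊆ S be μ_S-JM with μ_S(A) > 0, and let Y ⊆ S be a co-null set on which τ_S and T_S are continuous. Then the return time to A, τ_A(x) = min{t>0 : a_t x ∈ A}, is continuous at every point x ∈ A lying in (⋂_{I≥0} T_S^{−I}(Y)) minus (⋃_{I≥0} T_S^{−I}(∂A)); consequently τ_A and the first return map T_A are continuous μ_S|_A-almost everywhere. -/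
open Filter Topology

/-! Let `j` be the first return of `x` to `A`. Near `x`, every `y ∈ S` has the same
itinerary with respect to `A` during its first `j` returns to `S`: the iterates `TS^[i] x`, `0 < i < j`, lie in `S \ A` but not on the
relative boundary, hence outside `closure A`, and `TS^[j] x ∈ A` lies outside
`closure (S \ A)`; these are open conditions which persist under the continuous iterates.
So near `x` the return time to `A` is the Birkhoff sum `∑_{i < j} τS (TS^[i] y)`, which
is continuous at `x`. -/

section FirstHit

variable {X : Type*} [TopologicalSpace X] {f : X → X} {s A : Set X} {x : X}

def IsFirstHit (f : X → X) (A : Set X) (j : ℕ) (y : X) : Prop :=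
  f^[j] y ∈ A ∧ ∀ i : ℕ, 0 < i → i < j → f^[i] y ∉ A

theorem continuousWithinAt_iterate (hs : Set.MapsTo f s s)
    (hf : ∀ n, ContinuousWithinAt f s (f^[n] x)) (n : ℕ) :
    ContinuousWithinAt f^[n] s x := by
  induction n with
  | zero => exact continuousWithinAt_id
  | succ n ih =>
    rw [Function.iterate_succ']
    exact (hf n).comp ih (hs.iterate n)

theorem ContinuousWithinAt.birkhoffSum {M : Type*} [AddCommMonoid M] [TopologicalSpace M]
    [ContinuousAdd M] {g : X → M} {n : ℕ}
    (hg : ∀ i < n, ContinuousWithinAt g s (f^[i] x))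
    (hf : ∀ i < n, ContinuousWithinAt f^[i] s x) (hs : Set.MapsTo f s s) :
    ContinuousWithinAt (birkhoffSum f g n) s x :=
  tendsto_finsetSum _ fun i hi =>
    (hg i (Finset.mem_range.mp hi)).comp (hf i (Finset.mem_range.mp hi)) (hs.iterate i)

theorem ContinuousWithinAt.eventually_notMem_of_notMem_closure {g : X → X} {B : Set X}
    (hg : ContinuousWithinAt g s x) (hx : g x ∉ closure B) :
    ∀ᶠ y in 𝓝[s] x, g y ∉ B :=
  hg.eventually (isClosed_closure.isOpen_compl.mem_nhds hx) |>.mono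
    fun _ hy hB => hy (subset_closure hB)

theorem eventually_isFirstHit (hs : Set.MapsTo f s s) (hx : x ∈ s) {j : ℕ}
    (hf : ∀ i, ContinuousWithinAt f^[i] s x) (hj : IsFirstHit f A j x)
    (hbd : ∀ i, f^[i] x ∉ closure A ∩ closure (s \ A)) :
    ∀ᶠ y in 𝓝[s] x, IsFirstHit f A j y := by
  have hlast : ∀ᶠ y in 𝓝[s] x, f^[j] y ∉ s \ A :=
    (hf j).eventually_notMem_of_notMem_closure fun h => hbd j ⟨subset_closure hj.1, h⟩
  have hbefore : ∀ᶠ y in 𝓝[s] x, ∀ i ∈ Finset.range j, 0 < i → f^[i] y ∉ A := by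
    refine (eventually_all_finset _).mpr fun i hi => ?_
    by_cases hi0 : 0 < i
    · have hiA : f^[i] x ∈ closure (s \ A) :=
        subset_closure ⟨hs.iterate i hx, hj.2 i hi0 (Finset.mem_range.mp hi)⟩
      exact ((hf i).eventually_notMem_of_notMem_closure fun h => hbd i ⟨h, hiA⟩).mono
        fun _ hy _ => hy
    · exact Eventually.of_forall fun _ h => absurd h hi0
  filter_upwards [hlast, hbefore, self_mem_nhdsWithin] with y hy₁ hy₂ hys
  exact ⟨not_not.mp fun hA => hy₁ ⟨hs.iterate j hys, hA⟩,
    fun i hi0 hij => hy₂ i (Finset.mem_range.mpr hij) hi0⟩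

end FirstHit

theorem return_time_to_subset_continuous_general {X : Type*} [TopologicalSpace X]
    (a : ℝ → X → X)
    (hcont : Continuous fun p : ℝ × X => a p.1 p.2)
    (S : Set X) (τS : X → ℝ) (TS : X → X)
    (hTS_mem : ∀ y ∈ S, TS y ∈ S)
    (Y : Set X) (hYS : Y ⊆ S)
    (hYcont : ∀ y ∈ Y, ContinuousWithinAt τS S y ∧ ContinuousWithinAt TS S y)
    (A : Set X)
    (τA : X → ℝ)
    (hτA : ∀ y ∈ S, ∀ j : ℕ, 0 < j → TS^[j] y ∈ A →
      (∀ i : ℕ, 0 < i → i < j → TS^[i] y ∉ A) →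
      τA y = ∑ i ∈ Finset.range j, τS (TS^[i] y))
    (x : X)
    (hxY : ∀ I : ℕ, TS^[I] x ∈ Y)
    (hxBd : ∀ I : ℕ, TS^[I] x ∉ closure A ∩ closure (S \ A))
    (hxret : ∃ j : ℕ, 0 < j ∧ TS^[j] x ∈ A ∧ ∀ i : ℕ, 0 < i → i < j → TS^[i] x ∉ A) :
    ContinuousWithinAt τA S x ∧ ContinuousWithinAt (fun y => a (τA y) y) S x := by
  obtain ⟨j, hj, hfirst⟩ := hxret
  have hxS : x ∈ S := hYS (hxY 0)
  have hiter : ∀ i, ContinuousWithinAt TS^[i] S x :=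
    continuousWithinAt_iterate hTS_mem fun i => (hYcont _ (hxY i)).2
  have hsum : ContinuousWithinAt (birkhoffSum TS τS j) S x :=
    ContinuousWithinAt.birkhoffSum (fun i _ => (hYcont _ (hxY i)).1) (fun i _ => hiter i)
      hTS_mem
  have heq : τA =ᶠ[𝓝[S] x] birkhoffSum TS τS j := by
    filter_upwards [eventually_isFirstHit hTS_mem hxS hiter hfirst hxBd, self_mem_nhdsWithin]
      with y hy hyS
    exact hτA y hyS j hj hy.1 hy.2
  have hτAcont : ContinuousWithinAt τA S x :=
    hsum.congr_of_eventuallyEq heq (hτA x hxS j hj hfirst.1 hfirst.2)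
  exact ⟨hτAcont, hcont.continuousAt.comp_continuousWithinAt (hτAcont.prodMk continuousWithinAt_id)⟩

/-- Continuity of the return time to a subset `A` of a cross-section: if the
first-return data `(τS, TS)` of the cross-section `S` are continuous (within `S`) at
every point of `Y ⊆ S`, `A ⊆ S`, and `x ∈ A` is such that every forward iterate
`TS^[I] x` lies in `Y` and avoids the relative boundary `closure A ∩ closure (S \ A)` of
`A` in `S`, then the return time `τA` to `A` (and hence the first return map
`y ↦ a_{τA y} y` to `A`) is continuous at `x` within `S`. -/
theorem return_time_to_subset_continuous {X : Type*} [TopologicalSpace X]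
    [LocallyCompactSpace X] [SecondCountableTopology X]
    (a : ℝ → X → X)
    (hcont : Continuous fun p : ℝ × X => a p.1 p.2)
    (ha0 : ∀ x, a 0 x = x) (haAdd : ∀ s t x, a (s + t) x = a s (a t x))
    (S : Set X) (τS : X → ℝ) (TS : X → X)
    (hTS_def : ∀ y ∈ S, TS y = a (τS y) y)
    (hTS_mem : ∀ y ∈ S, TS y ∈ S)
    (hτS : ∀ y ∈ S, 0 < τS y ∧ a (τS y) y ∈ S ∧
      ∀ t : ℝ, 0 < t → a t y ∈ S → τS y ≤ t)
    (Y : Set X) (hYS : Y ⊆ S)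
    (hYcont : ∀ y ∈ Y, ContinuousWithinAt τS S y ∧ ContinuousWithinAt TS S y)
    (A : Set X) (hAS : A ⊆ S)
    (τA : X → ℝ)
    (hτA : ∀ y ∈ S, ∀ j : ℕ, 0 < j → TS^[j] y ∈ A →
      (∀ i : ℕ, 0 < i → i < j → TS^[i] y ∉ A) →
      τA y = ∑ i ∈ Finset.range j, τS (TS^[i] y))
    (x : X) (hxA : x ∈ A)
    (hxY : ∀ I : ℕ, TS^[I] x ∈ Y)
    (hxBd : ∀ I : ℕ, TS^[I] x ∉ closure A ∩ closure (S \ A))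
    (hxret : ∃ j : ℕ, 0 < j ∧ TS^[j] x ∈ A ∧ ∀ i : ℕ, 0 < i → i < j → TS^[i] x ∉ A) :
    ContinuousWithinAt τA S x ∧ ContinuousWithinAt (fun y => a (τA y) y) S x :=
  return_time_to_subset_continuous_general a hcont S τS TS hTS_mem Y hYS hYcont A τA hτA x hxY hxBd
    hxret
end
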